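/- Let n = 2m, let t be a positive integer with d = gcd(t, n) such that n/d is even, and let λ ∈ F_{2^n} with λ ∉ S, where S = { x^{2^t+1} : x ∈ F_{2^n} }. Let μ_2, …, μ_r ∈ F_{2^n} be nonzero elements such that Tr(λ(μ_i^{2^t} μ_j + μ_i μ_j^{2^t})) = 0 for all 2 ≤ i < j ≤ r, and let α ∈ F_{2^n} satisfy Tr(α μ_i) = 0 for all 2 ≤ i ≤ r. Then for every Boolean function F : F_2^r → F_2, the function h*(x) = Tr(λ x^{2^t+1}) + F(Tr(α x), φ_2(x), φ_3(x), …, φ_r(x)) is bent, where φ_i(x) = Tr(λ(μ_i x^{2^t} + μ_i^{2^t} x + μ_i^{2^t+1})) for 2 ≤ i ≤ r. -/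

import Mathlib

/-!
Write `f(x) = Tr(λ x^{2^t+1})` and `q = 2^t`. Over `𝔽₂`, `f` is quadratic with polar form
`B(x, y) = Tr(λ(x^q y + x y^q))`, and `φ_i(x) = B(x, μ_i) + f(μ_i)`.

Squaring the Walsh sum of a quadratic function leaves a character sum of its polar form, so `f`
is bent once `B` is nondegenerate. If `y ≠ 0` is in the radical of `B`, then
`λ^q y^{q²} = λ y`, so `w = λ y^{q+1}` satisfies `w^q = w`. Then `w = (w^{q/2})^{q+1}`, so
`λ = w / y^{q+1}` would be a `(q+1)`-st power.

The `μ_i` are pairwise `B`-orthogonal, so `f(x + Σ u_i μ_i) = f(x) + Σ u_i φ_i(x)`. Twisting the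
Walsh sum of `f` at `ν` by the character `u · (Tr(αx), φ(x))` therefore gives the Walsh sum at
`ν + u_0 α` of a translate of `f`. Because `Tr(α μ_i) = 0`, it equals `2^m (-1)^{f*(ν) + u·b}`,
where `f*` is the dual of `f` and `b = (f*(ν+α) + f*(ν), Tr(ν μ_i))`. Fourier inversion on
`𝔽₂^{k+1}` turns this into `W_{h*}(ν) = 2^m (-1)^{f*(ν) + F(b)}`.
-/
noncomputable section

noncomputable instance (n : ℕ) : Fintype (GaloisField 2 n) := Fintype.ofFinite _

/-- `(-1)^c` for `c ∈ F_2`. -/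
def sgn (c : ZMod 2) : ℤ := if c = 0 then 1 else -1

/-- The absolute trace `Tr : F_{2^n} → F_2`. -/
def Tr {n : ℕ} (x : GaloisField 2 n) : ZMod 2 :=
  Algebra.trace (ZMod 2) (GaloisField 2 n) x

/-- Walsh–Hadamard transform of a Boolean function on `F_{2^n}`. -/
def walsh {n : ℕ} (f : GaloisField 2 n → ZMod 2) (μ : GaloisField 2 n) : ℤ :=
  ∑ x : GaloisField 2 n, sgn (f x + Tr (μ * x))

/-- `f` is bent (where `n = 2m`): all Walsh coefficients are `±2^m`. -/
def IsBent {n : ℕ} (m : ℕ) (f : GaloisField 2 n → ZMod 2) : Prop :=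
  ∀ μ, walsh f μ = 2 ^ m ∨ walsh f μ = -(2 ^ m)

/-- `fs` is the dual of the bent function `f` (where `n = 2m`). -/
def IsDualOf {n : ℕ} (m : ℕ) (fs f : GaloisField 2 n → ZMod 2) : Prop :=
  ∀ μ, walsh f μ = 2 ^ m * sgn (fs μ)

open Finset Matrix

theorem sgn_add (a b : ZMod 2) : sgn (a + b) = sgn a * sgn b := by revert a b; decide

theorem sgn_zero : sgn 0 = 1 := rfl

theorem sgn_one : sgn 1 = -1 := rfl

theorem sgn_mul_self (a : ZMod 2) : sgn a * sgn a = 1 := by revert a; decide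

theorem sum_sgn_eq_zero {A : Type*} [AddCommGroup A] [Fintype A] (φ : A →+ ZMod 2) {a : A}
    (ha : φ a ≠ 0) : ∑ x, sgn (φ x) = 0 := by
  have ha : φ a = 1 := by revert ha; generalize φ a = c; revert c; decide
  refine self_eq_neg.mp ?_
  calc ∑ x, sgn (φ x) = ∑ x, sgn (φ (a + x)) :=
        (Fintype.sum_equiv (Equiv.addLeft a) _ _ fun _ => rfl).symm
    _ = -∑ x, sgn (φ x) := by simp [sgn_add, ha, sgn_one]

section Fourier

variable {ι : Type*} [Fintype ι] [DecidableEq ι]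

theorem sum_sgn_dotProduct (v : ι → ZMod 2) :
    ∑ u : ι → ZMod 2, sgn (u ⬝ᵥ v) = if v = 0 then (Fintype.card (ι → ZMod 2) : ℤ) else 0 := by
  split_ifs with hv
  · simp [hv, sgn_zero]
  · obtain ⟨j, hj⟩ := Function.ne_iff.mp hv
    exact sum_sgn_eq_zero (AddMonoidHom.mk' (· ⬝ᵥ v) fun a b => add_dotProduct a b v)
      (a := Pi.single j 1) (by simpa using hj)

theorem card_mul_sgn_eq_sum (F : (ι → ZMod 2) → ZMod 2) (v : ι → ZMod 2) :
    (Fintype.card (ι → ZMod 2) : ℤ) * sgn (F v) =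
      ∑ u, (∑ w, sgn (F w + u ⬝ᵥ w)) * sgn (u ⬝ᵥ v) := by
  have hadd : ∀ w : ι → ZMod 2, w + v = 0 ↔ w = v := fun w => by
    rw [add_eq_zero_iff_eq_neg, ZModModule.neg_eq_self]
  simp_rw [sum_mul, ← sgn_add, add_assoc, ← dotProduct_add, sgn_add (F _)]
  rw [sum_comm]
  simp_rw [← mul_sum, sum_sgn_dotProduct, hadd, mul_ite, mul_zero, sum_ite_eq', mem_univ,
    if_true, mul_comm]

theorem sum_sgn_add_comp_eq {X : Type*} [Fintype X] (g : X → ZMod 2) (ℓ : X → ι → ZMod 2)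
    (c : ℤ) (b : ι → ZMod 2) (h : ∀ u, ∑ x, sgn (g x + u ⬝ᵥ ℓ x) = c * sgn (u ⬝ᵥ b))
    (F : (ι → ZMod 2) → ZMod 2) : ∑ x, sgn (g x + F (ℓ x)) = c * sgn (F b) := by
  have hN : (Fintype.card (ι → ZMod 2) : ℤ) ≠ 0 := by positivity
  refine mul_left_cancel₀ hN ?_
  calc (Fintype.card (ι → ZMod 2) : ℤ) * ∑ x, sgn (g x + F (ℓ x))
        = ∑ x, sgn (g x) * (Fintype.card (ι → ZMod 2) * sgn (F (ℓ x))) := by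
        simp_rw [mul_sum, sgn_add]
        exact sum_congr rfl fun _ _ => by ring
    _ = ∑ u, (∑ w, sgn (F w + u ⬝ᵥ w)) * ∑ x, sgn (g x + u ⬝ᵥ ℓ x) := by
        simp_rw [card_mul_sgn_eq_sum, mul_sum, sgn_add]
        rw [sum_comm]
        exact sum_congr rfl fun _ _ => sum_congr rfl fun _ _ => by ring
    _ = c * ∑ u, (∑ w, sgn (F w + u ⬝ᵥ w)) * sgn (u ⬝ᵥ b) := by
        simp_rw [h, mul_sum]
        exact sum_congr rfl fun _ _ => by ring
    _ = Fintype.card (ι → ZMod 2) * (c * sgn (F b)) := by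
        rw [mul_left_comm, card_mul_sgn_eq_sum]

end Fourier

def HasPolarForm {V : Type*} [AddCommGroup V] [Module (ZMod 2) V] (f : V → ZMod 2)
    (B : LinearMap.BilinForm (ZMod 2) V) : Prop :=
  ∀ x y, f (x + y) = f x + f y + B x y

namespace HasPolarForm

variable {V : Type*} [AddCommGroup V] [Module (ZMod 2) V] {f : V → ZMod 2}
  {B : LinearMap.BilinForm (ZMod 2) V}

theorem map_zero (hf : HasPolarForm f B) : f 0 = 0 := by
  simpa using hf 0 0

theorem map_smul (hf : HasPolarForm f B) (c : ZMod 2) (v : V) : f (c • v) = c * f v := by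
  obtain rfl | rfl : c = 0 ∨ c = 1 := by revert c; decide
  · simp [hf.map_zero]
  · simp

theorem map_sum_smul {ι : Type*} (hf : HasPolarForm f B) {μ : ι → V}
    (hμ : Pairwise fun i j => B (μ i) (μ j) = 0) (u : ι → ZMod 2) (s : Finset ι) :
    f (∑ i ∈ s, u i • μ i) = ∑ i ∈ s, u i * f (μ i) := by
  classical
  induction s using Finset.induction_on with
  | empty => simp [hf.map_zero]
  | insert a s has ih =>
    have horth : B (u a • μ a) (∑ i ∈ s, u i • μ i) = 0 := by
      simp only [map_sum, LinearMap.map_smul, LinearMap.smul_apply, smul_eq_mul]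
      exact sum_eq_zero fun i hi => by rw [hμ (ne_of_mem_of_not_mem hi has).symm]; simp
    rw [sum_insert has, sum_insert has, hf, ih, horth, hf.map_smul, add_zero]

theorem add_sum_smul {ι : Type*} [Fintype ι] (hf : HasPolarForm f B) {μ : ι → V}
    (hμ : Pairwise fun i j => B (μ i) (μ j) = 0) (u : ι → ZMod 2) (x : V) :
    f (x + ∑ i, u i • μ i) = f x + ∑ i, u i * (B x (μ i) + f (μ i)) := by
  simp only [hf x, hf.map_sum_smul hμ, map_sum, LinearMap.map_smul, smul_eq_mul, mul_add,
    sum_add_distrib]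
  ring

theorem add_linear (hf : HasPolarForm f B) (φ : V →+ ZMod 2) :
    HasPolarForm (fun x => f x + φ x) B := fun x y => by
  simp only [hf x y, map_add]; ring

theorem sq_sum_sgn [Fintype V] (hf : HasPolarForm f B) (hB : B.SeparatingRight) :
    (∑ x, sgn (f x)) ^ 2 = Fintype.card V := by
  classical
  have hinner : ∀ y, ∑ x, sgn (B x y) = if y = 0 then (Fintype.card V : ℤ) else 0 := by
    intro y
    split_ifs with hy
    · simp [hy, sgn_zero]
    · obtain ⟨x, hx⟩ : ∃ x, B x y ≠ 0 := by
        by_contra! h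
        exact hy (hB y h)
      exact sum_sgn_eq_zero (B.flip y).toAddMonoidHom (a := x) hx
  calc (∑ x, sgn (f x)) ^ 2 = ∑ x, ∑ y, sgn (f x) * sgn (f (x + y)) := by
        rw [sq, sum_mul_sum]
        exact sum_congr rfl fun x _ =>
          (Fintype.sum_equiv (Equiv.addLeft x) _ _ fun _ => rfl).symm
    _ = ∑ y, sgn (f y) * ∑ x, sgn (B x y) := by
        rw [sum_comm]
        refine sum_congr rfl fun y _ => ?_
        rw [mul_sum]
        refine sum_congr rfl fun x _ => ?_
        rw [hf, sgn_add, sgn_add, ← mul_assoc, ← mul_assoc, sgn_mul_self, one_mul]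
    _ = Fintype.card V := by
        simp [hinner, hf.map_zero, sgn_zero]

end HasPolarForm

theorem exists_pow_two_pow_add_one_eq {M : Type*} [Monoid M] {t : ℕ} (ht : 0 < t) {w : M}
    (hw : w ^ 2 ^ t = w) : ∃ y, y ^ (2 ^ t + 1) = w := by
  obtain ⟨s, rfl⟩ : ∃ s, t = s + 1 := ⟨t - 1, by omega⟩
  refine ⟨w ^ 2 ^ s, ?_⟩
  calc (w ^ 2 ^ s) ^ (2 ^ (s + 1) + 1) = (w ^ 2 ^ (s + 1)) ^ 2 ^ s * w ^ 2 ^ s := by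
        rw [pow_succ, ← pow_mul, ← pow_mul, mul_comm]
    _ = w := by rw [hw, ← pow_add, ← two_mul, ← pow_succ', hw]

theorem exists_pow_two_pow_add_one_eq_of_pow_mul_pow_eq {K : Type*} [Field K] {t : ℕ} (ht : 0 < t)
    {lam z : K} (hz : z ≠ 0) (h : lam ^ 2 ^ t * z ^ (2 ^ t * 2 ^ t) = lam * z) :
    ∃ y, y ^ (2 ^ t + 1) = lam := by
  have hw : (lam * z ^ (2 ^ t + 1)) ^ 2 ^ t = lam * z ^ (2 ^ t + 1) := by
    rw [mul_pow, ← pow_mul, add_mul, one_mul, pow_add, ← mul_assoc, h]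
    ring
  obtain ⟨y, hy⟩ := exists_pow_two_pow_add_one_eq ht hw
  exact ⟨y / z, by rw [div_pow, hy]; field_simp⟩

-- `GaloisField p 0` is the splitting field of `X - X = 0`, that is `𝔽_p`, not a field with
-- `p ^ 0` elements.
theorem GaloisField.bot_eq_top_zero (p : ℕ) [Fact p.Prime] :
    (⊥ : Subalgebra (ZMod p) (GaloisField p 0)) = ⊤ := by
  open Polynomial in
  have htop := IsSplittingField.adjoin_rootSet (SplittingField (X ^ p ^ 0 - X : (ZMod p)[X]))
    (X ^ p ^ 0 - X : (ZMod p)[X])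
  simp only [pow_zero, pow_one, sub_self, rootSet_zero, Algebra.adjoin_empty] at htop
  exact htop

section GaloisField

variable {n : ℕ}

theorem ne_zero_of_notMem_range_pow {t : ℕ} {lam : GaloisField 2 n}
    (hlam : lam ∉ Set.range (fun x : GaloisField 2 n => x ^ (2 ^ t + 1))) : n ≠ 0 := by
  rintro rfl
  obtain ⟨r, rfl⟩ := Algebra.mem_bot.mp (GaloisField.bot_eq_top_zero 2 ▸ Algebra.mem_top : lam ∈ ⊥)
  have hr : r * r = r := by clear hlam; revert r; decide
  exact hlam ⟨_, (IsIdempotentElem.map hr (algebraMap (ZMod 2) (GaloisField 2 0))).pow_succ_eq _⟩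

theorem card_galoisField (hn : n ≠ 0) : Fintype.card (GaloisField 2 n) = 2 ^ n := by
  rw [← Nat.card_eq_fintype_card, GaloisField.card _ _ hn]

theorem Tr_add (x y : GaloisField 2 n) : Tr (x + y) = Tr x + Tr y := map_add _ x y

theorem Tr_sum {ι : Type*} (s : Finset ι) (x : ι → GaloisField 2 n) :
    Tr (∑ i ∈ s, x i) = ∑ i ∈ s, Tr (x i) := map_sum _ x s

theorem Tr_smul (c : ZMod 2) (x : GaloisField 2 n) : Tr (c • x) = c * Tr x := map_smul _ c x

theorem Tr_pow_two_pow (t : ℕ) (x : GaloisField 2 n) : Tr (x ^ 2 ^ t) = Tr x := by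
  induction t with
  | zero => rw [pow_zero, pow_one]
  | succ t ih =>
    rw [pow_succ, pow_mul, ← ih]
    simpa [Tr] using Algebra.trace_eq_of_algEquiv
      (FiniteField.frobeniusAlgEquivOfAlgebraic (ZMod 2) (GaloisField 2 n)) (x ^ 2 ^ t)

theorem eq_zero_of_forall_Tr_mul_pow_eq_zero (t : ℕ) {c : GaloisField 2 n}
    (h : ∀ x, Tr (c * x ^ 2 ^ t) = 0) : c = 0 := by
  refine (traceForm_nondegenerate (ZMod 2) (GaloisField 2 n)).1 c fun y => ?_
  obtain ⟨x, rfl⟩ := (iterateFrobeniusEquiv (GaloisField 2 n) 2 t).surjective y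
  exact h x

theorem smul_pow_two_pow (c : ZMod 2) (t : ℕ) (x : GaloisField 2 n) :
    (c • x) ^ 2 ^ t = c • x ^ 2 ^ t := by
  rw [smul_pow, ZMod.pow_card_pow]

def goldPolar (lam : GaloisField 2 n) (t : ℕ) : LinearMap.BilinForm (ZMod 2) (GaloisField 2 n) :=
  LinearMap.mk₂ (ZMod 2) (fun x y => Tr (lam * (x ^ 2 ^ t * y + x * y ^ 2 ^ t)))
    (fun x x' y => by rw [← Tr_add, add_pow_char_pow]; ring_nf)
    (fun c x y => by
      rw [smul_eq_mul, ← Tr_smul, smul_pow_two_pow]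
      simp only [smul_mul_assoc, mul_smul_comm, ← smul_add])
    (fun x y y' => by rw [← Tr_add, add_pow_char_pow]; ring_nf)
    (fun c x y => by
      rw [smul_eq_mul, ← Tr_smul, smul_pow_two_pow]
      simp only [mul_smul_comm, ← smul_add])

theorem goldPolar_apply (lam : GaloisField 2 n) (t : ℕ) (x y : GaloisField 2 n) :
    goldPolar lam t x y = Tr (lam * (x ^ 2 ^ t * y + x * y ^ 2 ^ t)) := rfl

theorem goldPolar_comm (lam : GaloisField 2 n) (t : ℕ) (x y : GaloisField 2 n) :
    goldPolar lam t x y = goldPolar lam t y x := by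
  simp only [goldPolar_apply]; ring_nf

theorem hasPolarForm_gold (lam : GaloisField 2 n) (t : ℕ) :
    HasPolarForm (fun x => Tr (lam * x ^ (2 ^ t + 1))) (goldPolar lam t) := fun x y => by
  simp only [goldPolar_apply, ← Tr_add, pow_succ, add_pow_char_pow]
  ring_nf

theorem goldPolar_separatingRight {t : ℕ} (ht : 0 < t) {lam : GaloisField 2 n}
    (hlam : lam ∉ Set.range (fun x : GaloisField 2 n => x ^ (2 ^ t + 1))) :
    (goldPolar lam t).SeparatingRight := by
  intro y hy
  by_contra hy0
  refine hlam (exists_pow_two_pow_add_one_eq_of_pow_mul_pow_eq ht hy0 ?_)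
  rw [← CharTwo.add_eq_zero]
  refine eq_zero_of_forall_Tr_mul_pow_eq_zero t fun x => ?_
  -- `Tr` is invariant under `z ↦ z^{2^t}`, which moves the Frobenius from `y` onto `x`.
  calc Tr ((lam ^ 2 ^ t * y ^ (2 ^ t * 2 ^ t) + lam * y) * x ^ 2 ^ t)
      = Tr ((lam * y ^ 2 ^ t * x) ^ 2 ^ t) + Tr (lam * y * x ^ 2 ^ t) := by
        rw [add_mul, Tr_add, mul_pow, mul_pow, ← pow_mul]
    _ = goldPolar lam t x y := by
        rw [Tr_pow_two_pow, ← Tr_add, goldPolar_apply]; ring_nf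
    _ = 0 := hy x

theorem walsh_comp_add_right (f : GaloisField 2 n → ZMod 2) (c ν : GaloisField 2 n) :
    ∑ x, sgn (f (x + c) + Tr (ν * x)) = sgn (Tr (ν * c)) * walsh f ν := by
  rw [walsh, mul_sum]
  refine Fintype.sum_equiv (Equiv.addRight c) _ _ fun x => ?_
  change _ = sgn (Tr (ν * c)) * sgn (f (x + c) + Tr (ν * (x + c)))
  rw [mul_add, Tr_add, ← add_assoc, sgn_add (f (x + c) + _), mul_left_comm, sgn_mul_self,
    mul_one]

theorem IsBent.isDualOf {m : ℕ} {f : GaloisField 2 n → ZMod 2} (hf : IsBent m f) :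
    IsDualOf m (fun ν => if walsh f ν = 2 ^ m then 0 else 1) f := by
  intro ν
  dsimp only
  split_ifs with h
  · rw [h, sgn_zero, mul_one]
  · rw [(hf ν).resolve_left h, sgn_one, mul_neg_one]

theorem IsDualOf.isBent {m : ℕ} {f fs : GaloisField 2 n → ZMod 2} (h : IsDualOf m fs f) :
    IsBent m f := by
  intro ν
  rw [h ν]
  obtain h0 | h1 : fs ν = 0 ∨ fs ν = 1 := by generalize fs ν = c; revert c; decide
  · left; rw [h0, sgn_zero, mul_one]
  · right; rw [h1, sgn_one, mul_neg_one]

theorem HasPolarForm.isBent {m : ℕ} (hn : n = 2 * m) (hn0 : n ≠ 0) {f : GaloisField 2 n → ZMod 2}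
    {B : LinearMap.BilinForm (ZMod 2) (GaloisField 2 n)} (hf : HasPolarForm f B)
    (hB : B.SeparatingRight) : IsBent m f := by
  intro ν
  rw [← sq_eq_sq_iff_eq_or_eq_neg, ← pow_mul', ← hn]
  have := (hf.add_linear (AddMonoidHom.mk' (fun x => Tr (ν * x)) fun x y => by
    rw [mul_add, Tr_add])).sq_sum_sgn hB
  rwa [card_galoisField hn0, Nat.cast_pow, Nat.cast_ofNat] at this

variable {m k : ℕ} {f fs : GaloisField 2 n → ZMod 2}
  {B : LinearMap.BilinForm (ZMod 2) (GaloisField 2 n)} {μ : Fin k → GaloisField 2 n}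
  {α : GaloisField 2 n}

theorem HasPolarForm.sum_sgn_add_dotProduct (hf : HasPolarForm f B) (hfs : IsDualOf m fs f)
    (hμ : Pairwise fun i j => B (μ i) (μ j) = 0) (hα : ∀ i, Tr (α * μ i) = 0)
    (ν : GaloisField 2 n) (u : Fin (k + 1) → ZMod 2) :
    ∑ x, sgn (f x + Tr (ν * x) + u ⬝ᵥ Fin.cons (Tr (α * x)) fun i => B x (μ i) + f (μ i)) =
      2 ^ m * sgn (fs ν) * sgn (u ⬝ᵥ Fin.cons (fs (ν + α) + fs ν) fun i => Tr (ν * μ i)) := by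
  set c := ∑ i, u i.succ • μ i
  set ν' := ν + u 0 • α
  have hshift : ∀ x, f x + Tr (ν * x) + u ⬝ᵥ Fin.cons (Tr (α * x)) (fun i => B x (μ i) + f (μ i))
      = f (x + c) + Tr (ν' * x) := fun x => by
    rw [show f (x + c) = _ from hf.add_sum_smul hμ _ x]
    simp only [dotProduct, Fin.sum_univ_succ, Fin.cons_zero, Fin.cons_succ, ν', add_mul,
      smul_mul_assoc, Tr_add, Tr_smul]
    ring
  have htr : Tr (ν' * c) = ∑ i, u i.succ * Tr (ν * μ i) := by
    simp only [ν', c, mul_sum, add_mul, smul_mul_assoc, mul_smul_comm, Tr_sum, Tr_add, Tr_smul, hα,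
      mul_zero, add_zero]
  have hdual : fs ν' = fs ν + u 0 * (fs (ν + α) + fs ν) := by
    obtain h0 | h1 : u 0 = 0 ∨ u 0 = 1 := by generalize u 0 = b; revert b; decide
    · simp [ν', h0]
    · simp only [ν', h1, one_smul]
      rw [one_mul, add_left_comm, CharTwo.add_self_eq_zero, add_zero]
  simp_rw [hshift]
  rw [walsh_comp_add_right, hfs, hdual, htr]
  simp only [dotProduct, Fin.sum_univ_succ, Fin.cons_zero, Fin.cons_succ, sgn_add]
  ring

theorem HasPolarForm.isDualOf_add_comp (hf : HasPolarForm f B) (hfs : IsDualOf m fs f)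
    (hμ : Pairwise fun i j => B (μ i) (μ j) = 0) (hα : ∀ i, Tr (α * μ i) = 0)
    (F : (Fin (k + 1) → ZMod 2) → ZMod 2) :
    IsDualOf m (fun ν => fs ν + F (Fin.cons (fs (ν + α) + fs ν) fun i => Tr (ν * μ i)))
      (fun x => f x + F (Fin.cons (Tr (α * x)) fun i => B x (μ i) + f (μ i))) := by
  intro ν
  rw [walsh, sgn_add, ← mul_assoc, ← sum_sgn_add_comp_eq (fun x => f x + Tr (ν * x)) _ _ _
    (hf.sum_sgn_add_dotProduct hfs hμ hα ν) F]
  exact sum_congr rfl fun x _ => congrArg sgn (add_right_comm _ _ _)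

end GaloisField

theorem statement12_general {n m k : ℕ} (hn : n = 2 * m) (t : ℕ) (ht : 0 < t)
    (lam : GaloisField 2 n)
    (hlam : lam ∉ Set.range (fun x : GaloisField 2 n => x ^ (2 ^ t + 1)))
    (μ : Fin k → GaloisField 2 n)
    (hij : ∀ i j : Fin k, i < j →
      Tr (lam * ((μ i) ^ (2 ^ t) * μ j + μ i * (μ j) ^ (2 ^ t))) = 0)
    (α : GaloisField 2 n) (hα : ∀ i, Tr (α * μ i) = 0)
    (F : (Fin (k + 1) → ZMod 2) → ZMod 2) :
    IsBent m (fun x => Tr (lam * x ^ (2 ^ t + 1)) +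
      F (Fin.cons (Tr (α * x))
        (fun i => Tr (lam * (μ i * x ^ (2 ^ t) + (μ i) ^ (2 ^ t) * x
          + (μ i) ^ (2 ^ t + 1)))))) := by
  have hf := hasPolarForm_gold lam t
  have hμ : Pairwise fun i j => goldPolar lam t (μ i) (μ j) = 0 := fun i j hne =>
    hne.lt_or_gt.elim (hij i j) fun h => (goldPolar_comm lam t _ _).trans (hij j i h)
  have hbent :=
    hf.isBent hn (ne_zero_of_notMem_range_pow hlam) (goldPolar_separatingRight ht hlam)
  have hφ : ∀ i x, Tr (lam * (μ i * x ^ 2 ^ t + μ i ^ 2 ^ t * x + μ i ^ (2 ^ t + 1))) =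
      goldPolar lam t x (μ i) + Tr (lam * μ i ^ (2 ^ t + 1)) := fun i x => by
    rw [goldPolar_apply, ← Tr_add]; ring_nf
  simp only [hφ]
  exact (hf.isDualOf_add_comp hbent.isDualOf hμ hα F).isBent

/-- Theorem from Gold functions: under the stated conditions the function
`h*(x) = Tr(λ x^{2^t+1}) + F(Tr(α x), φ_2(x), …, φ_r(x))` is bent, where `r = k + 1` and
`φ_i(x) = Tr(λ(μ_i x^{2^t} + μ_i^{2^t} x + μ_i^{2^t+1}))`. -/
theorem statement12 {n m k : ℕ} (hn : n = 2 * m) (t : ℕ) (ht : 0 < t)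
    (hev : Even (n / Nat.gcd t n))
    (lam : GaloisField 2 n)
    (hlam : lam ∉ Set.range (fun x : GaloisField 2 n => x ^ (2 ^ t + 1)))
    (μ : Fin k → GaloisField 2 n) (hμ : ∀ i, μ i ≠ 0)
    (hij : ∀ i j : Fin k, i < j →
      Tr (lam * ((μ i) ^ (2 ^ t) * μ j + μ i * (μ j) ^ (2 ^ t))) = 0)
    (α : GaloisField 2 n) (hα : ∀ i, Tr (α * μ i) = 0)
    (F : (Fin (k + 1) → ZMod 2) → ZMod 2) :
    IsBent m (fun x => Tr (lam * x ^ (2 ^ t + 1)) +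
      F (Fin.cons (Tr (α * x))
        (fun i => Tr (lam * (μ i * x ^ (2 ^ t) + (μ i) ^ (2 ^ t) * x
          + (μ i) ^ (2 ^ t + 1)))))) :=
  statement12_general hn t ht lam hlam μ hij α hα F

end
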